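/- For every finite poset X with n elements, the pedestal polynomial 𝔥_P(x_1, x_2, x_3, …) = Σ_{Q ∈ Tot_X} m_{PQ}(x_1, x_2, x_3, …) does not depend on the choice of the linear extension P ∈ Tot_X. Equivalently, the matrix M̃^X with entries (M̃^X)_{PQ} = m_{PQ} is stochastic up to scale: the vector (1,1,…,1)ᵀ is a right eigenvector of M̃^X with eigenvalue 𝔥_X(x_1, x_2, x_3, …). -/

import Mathlib

/-- A linear extension of a partially ordered set `X` with `n` elements:
an order-preserving bijection `X ≃ Fin n`. -/
def LinExt (X : Type*) [PartialOrder X] (n : ℕ) : Type _ :=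
  {P : X ≃ Fin n // ∀ a b : X, a ≤ b → P a ≤ P b}

/-- The pedestal `q_{PQ}` of `Q` with respect to `P`, as a function of the (0-based)
position `k`: the number of positions `j ≤ k` such that `Q⁻¹(j)` is a
`(P,Q)`-disagreement node. -/
def ped {X : Type*} [PartialOrder X] {n : ℕ} (P Q : LinExt X n) (k : Fin n) : ℕ :=
  (Finset.univ.filter (fun j : Fin n => j ≤ k ∧ 0 < j.1 ∧
    P.1 (Q.1.symm j) <
      P.1 (Q.1.symm ⟨j.1 - 1, Nat.lt_of_le_of_lt (Nat.sub_le _ _) j.2⟩))).card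

/-- The monomial `m_{PQ} = x_1^{l_1-1} x_2^{l_2-l_1} ⋯ x_{r+1}^{n-l_r+1}` attached to the
pedestal of `Q` with respect to `P` (where `l_1 < … < l_r` are the positions of the
`(P,Q)`-disagreement nodes): position `k` contributes the variable `x_{1+q_{PQ}(Q⁻¹ k)}`. -/
noncomputable def pedMonomial {X : Type*} [PartialOrder X] {n : ℕ} (P Q : LinExt X n) :
    MvPolynomial ℕ ℤ :=
  ∏ k : Fin n, MvPolynomial.X (1 + ped P Q k)

/-! The monomial `m_{PQ}` only sees which consecutive positions of `Q` are descents of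
`P ∘ Q⁻¹`. Let `P'` arise from `P` by exchanging two incomparable elements `a, b` that sit
in consecutive positions of `P`. The involution of `Tot_X` exchanging `a` and `b` in `Q`
when they are consecutive in `Q`, and fixing `Q` otherwise, then satisfies
`m_{P'Q'} = m_{PQ}`: in the first case `P' ∘ Q'⁻¹ = P ∘ Q⁻¹`, in the second exchanging the
consecutive values `P a, P b` alters no comparison between consecutive positions of `Q`.
Hence `∑_Q m_{PQ}` is invariant under such exchanges, and these connect any two linear
extensions, as in bubble sort. -/

open Function

theorem Equiv.swap_apply_lt_swap_apply_iff {α : Type*} [DecidableEq α] {f : α → ℕ}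
    (hf : Injective f) {a b x y : α} (hab : f a + 1 = f b ∨ f b + 1 = f a)
    (hxy : ¬(x = a ∧ y = b)) (hyx : ¬(x = b ∧ y = a)) :
    f (Equiv.swap a b x) < f (Equiv.swap a b y) ↔ f x < f y := by
  rw [Equiv.swap_apply_def, Equiv.swap_apply_def]
  grind [hf.eq_iff]

theorem Equiv.swap_apply_le_swap_apply_iff {α : Type*} [DecidableEq α] {f : α → ℕ}
    (hf : Injective f) {a b x y : α} (hab : f a + 1 = f b ∨ f b + 1 = f a)
    (hxy : ¬(x = a ∧ y = b)) (hyx : ¬(x = b ∧ y = a)) :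
    f (Equiv.swap a b x) ≤ f (Equiv.swap a b y) ↔ f x ≤ f y := by
  simpa only [not_lt] using
    (Equiv.swap_apply_lt_swap_apply_iff hf hab (fun h => hyx h.symm) (fun h => hxy h.symm)).not

namespace LinExt

variable {X : Type*} [PartialOrder X] {n : ℕ}

@[ext]
theorem ext {P Q : LinExt X n} (h : ∀ x, P.1 x = Q.1 x) : P = Q :=
  Subtype.ext (Equiv.ext h)

theorem val_injective (Q : LinExt X n) : Injective fun x => (Q.1 x : ℕ) :=
  Fin.val_injective.comp Q.1.injective

def disagreements (P P' : LinExt X n) : Set (X × X) :=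
  {p | P.1 p.1 < P.1 p.2 ∧ P'.1 p.2 < P'.1 p.1}

theorem incompRel_of_mem_disagreements {P P' : LinExt X n} {a b : X}
    (h : (a, b) ∈ disagreements P P') : IncompRel (· ≤ ·) a b :=
  ⟨fun hab => (P'.2 a b hab).not_gt h.2, fun hba => (P.2 b a hba).not_gt h.1⟩

theorem exists_adjacent_mem_disagreements {P P' : LinExt X n} (h : P ≠ P') :
    ∃ a b, (P.1 a : ℕ) + 1 = P.1 b ∧ (a, b) ∈ disagreements P P' := by
  by_contra! hagree
  apply h
  have hmono : StrictMono (P.1.symm.trans P'.1) := by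
    cases n with
    | zero => exact fun i => i.elim0
    | succ m =>
      refine Fin.strictMono_iff_lt_succ.2 fun i => not_le.1 fun hle => ?_
      refine hagree (P.1.symm i.castSucc) (P.1.symm i.succ) (by simp) ⟨by simp, hle.lt_of_ne ?_⟩
      exact P'.1.injective.ne (P.1.symm.injective.ne Fin.castSucc_lt_succ.ne')
  exact ext fun x => by simpa using (congrFun hmono.eq_id (P.1 x)).symm

def Adjacent (Q : LinExt X n) (a b : X) : Prop :=
  (Q.1 a : ℕ) + 1 = Q.1 b ∨ (Q.1 b : ℕ) + 1 = Q.1 a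

instance (Q : LinExt X n) (a b : X) : Decidable (Q.Adjacent a b) :=
  inferInstanceAs (Decidable (_ ∨ _))

variable [DecidableEq X] {a b : X}

def swap (Q : LinExt X n) (hab : IncompRel (· ≤ ·) a b) (hQ : Q.Adjacent a b) : LinExt X n :=
  ⟨(Equiv.swap a b).trans Q.1, fun x y hxy => by
    refine Fin.le_def.2
      ((Equiv.swap_apply_le_swap_apply_iff Q.val_injective hQ ?_ ?_).2 (Q.2 x y hxy))
    · rintro ⟨rfl, rfl⟩; exact hab.1 hxy
    · rintro ⟨rfl, rfl⟩; exact hab.2 hxy⟩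

@[simp]
theorem swap_apply (Q : LinExt X n) (hab : IncompRel (· ≤ ·) a b) (hQ : Q.Adjacent a b)
    (x : X) :
    (Q.swap hab hQ).1 x = Q.1 (Equiv.swap a b x) := rfl

theorem adjacent_swap (Q : LinExt X n) (hab : IncompRel (· ≤ ·) a b) (hQ : Q.Adjacent a b) :
    (Q.swap hab hQ).Adjacent a b := by
  simpa [Adjacent, or_comm] using hQ

theorem disagreements_swap {P P' : LinExt X n} (hab : IncompRel (· ≤ ·) a b)
    (hPab : (P.1 a : ℕ) + 1 = P.1 b) (hmem : (a, b) ∈ disagreements P P') :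
    disagreements (P.swap hab (.inl hPab)) P' = disagreements P P' \ {(a, b)} := by
  ext ⟨x, y⟩
  change (P.1 (Equiv.swap a b x) < P.1 (Equiv.swap a b y) ∧ P'.1 y < P'.1 x) ↔
    (P.1 x < P.1 y ∧ P'.1 y < P'.1 x) ∧ (x, y) ∉ ({(a, b)} : Set (X × X))
  by_cases hxy : x = a ∧ y = b
  · obtain ⟨rfl, rfl⟩ := hxy
    simp only [Equiv.swap_apply_left, Equiv.swap_apply_right, Fin.lt_def]
    simp only [Set.mem_singleton_iff, not_true_eq_false, and_false, iff_false]
    omega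
  by_cases hyx : x = b ∧ y = a
  · obtain ⟨rfl, rfl⟩ := hyx
    simp [hmem.2.not_gt]
  rw [Fin.lt_def, Fin.lt_def,
    Equiv.swap_apply_lt_swap_apply_iff P.val_injective (.inl hPab) hxy hyx]
  simp [hxy]

theorem apply_eq_apply_of_swap_invariant {β : Sort*} (f : LinExt X n → β)
    (hf : ∀ (P : LinExt X n) (a b : X) (hab : IncompRel (· ≤ ·) a b) (hP : P.Adjacent a b),
      f (P.swap hab hP) = f P)
    (P P' : LinExt X n) : f P = f P' := by
  have : Finite X := .of_equiv _ P.1.symm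
  induction hk : (disagreements P P').ncard using Nat.strong_induction_on generalizing P with
  | _ k ih =>
  obtain rfl | hne := eq_or_ne P P'
  · rfl
  obtain ⟨a, b, hPab, hmem⟩ := exists_adjacent_mem_disagreements hne
  have hab := incompRel_of_mem_disagreements hmem
  rw [← hf P a b hab (.inl hPab)]
  refine ih _ ?_ _ rfl
  rw [← hk, disagreements_swap hab hPab hmem]
  exact Set.ncard_sdiff_singleton_lt_of_mem hmem

def swapIfAdjacent (hab : IncompRel (· ≤ ·) a b) (Q : LinExt X n) : LinExt X n :=
  if hQ : Q.Adjacent a b then Q.swap hab hQ else Q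

theorem swapIfAdjacent_of_adjacent (hab : IncompRel (· ≤ ·) a b) {Q : LinExt X n}
    (hQ : Q.Adjacent a b) : swapIfAdjacent hab Q = Q.swap hab hQ :=
  dif_pos hQ

theorem swapIfAdjacent_of_not_adjacent (hab : IncompRel (· ≤ ·) a b) {Q : LinExt X n}
    (hQ : ¬Q.Adjacent a b) : swapIfAdjacent hab Q = Q :=
  dif_neg hQ

theorem swapIfAdjacent_involutive (hab : IncompRel (· ≤ ·) a b) :
    Involutive (swapIfAdjacent hab : LinExt X n → LinExt X n) := by
  intro Q
  by_cases hQ : Q.Adjacent a b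
  · rw [swapIfAdjacent_of_adjacent hab hQ,
      swapIfAdjacent_of_adjacent hab (Q.adjacent_swap hab hQ)]
    ext x
    simp
  · rw [swapIfAdjacent_of_not_adjacent hab hQ, swapIfAdjacent_of_not_adjacent hab hQ]

end LinExt

section Pedestal

variable {X : Type*} [PartialOrder X] {n : ℕ}

theorem pedMonomial_congr {P Q P' Q' : LinExt X n}
    (h : ∀ i j : Fin n, (i : ℕ) + 1 = j →
      (P.1 (Q.1.symm j) < P.1 (Q.1.symm i) ↔ P'.1 (Q'.1.symm j) < P'.1 (Q'.1.symm i))) :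
    pedMonomial P Q = pedMonomial P' Q' := by
  refine Finset.prod_congr rfl fun k _ => ?_
  unfold ped
  congr 3
  refine Finset.filter_congr fun j _ => and_congr_right fun _ => and_congr_right fun hj => ?_
  exact h _ j (by simp only; omega)

variable [DecidableEq X] {a b : X}

theorem pedMonomial_swap_swapIfAdjacent (hab : IncompRel (· ≤ ·) a b) {P : LinExt X n}
    (hP : P.Adjacent a b) (Q : LinExt X n) :
    pedMonomial (P.swap hab hP) (LinExt.swapIfAdjacent hab Q) = pedMonomial P Q := by
  by_cases hQ : Q.Adjacent a b
  · rw [LinExt.swapIfAdjacent_of_adjacent hab hQ]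
    exact pedMonomial_congr fun i j _ => by simp [LinExt.swap]
  · rw [LinExt.swapIfAdjacent_of_not_adjacent hab hQ]
    refine pedMonomial_congr fun i j hij => ?_
    simp only [LinExt.swap_apply, Fin.lt_def]
    refine Equiv.swap_apply_lt_swap_apply_iff P.val_injective hP ?_ ?_
    · rintro ⟨hja, hib⟩
      exact hQ (.inr (by simpa [← hja, ← hib] using hij))
    · rintro ⟨hjb, hia⟩
      exact hQ (.inl (by simpa [← hjb, ← hia] using hij))

theorem sum_pedMonomial_swap [Fintype (LinExt X n)] (hab : IncompRel (· ≤ ·) a b)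
    {P : LinExt X n} (hP : P.Adjacent a b) :
    ∑ Q, pedMonomial (P.swap hab hP) Q = ∑ Q, pedMonomial P Q := by
  rw [← Equiv.sum_comp ((LinExt.swapIfAdjacent_involutive hab).toPerm _)]
  exact Fintype.sum_congr _ _ (pedMonomial_swap_swapIfAdjacent hab hP)

end Pedestal

theorem pedestal_polynomial_independent_general (X : Type*) [PartialOrder X] (n : ℕ)
    [Fintype (LinExt X n)] :
    (∀ P P' : LinExt X n,
      ∑ Q : LinExt X n, pedMonomial P Q = ∑ Q : LinExt X n, pedMonomial P' Q) ∧
    Matrix.mulVec (fun P Q : LinExt X n => pedMonomial P Q) (fun _ => 1) =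
      fun P => ∑ Q : LinExt X n, pedMonomial P Q := by
  classical
  refine ⟨LinExt.apply_eq_apply_of_swap_invariant _ fun P a b hab hP =>
    sum_pedMonomial_swap hab hP, ?_⟩
  ext P
  simp [Matrix.mulVec, dotProduct]

/-- The pedestal polynomial `𝔥_P = Σ_Q m_{PQ}` does not depend on the linear extension
`P`; equivalently the matrix `M̃^X` with entries `m_{PQ}` is stochastic up to scale: the
all-ones vector is a right eigenvector, with eigenvalue `𝔥_X`. -/
theorem pedestal_polynomial_independent (X : Type*) [PartialOrder X] [Fintype X] (n : ℕ)
    (hn : Fintype.card X = n) [Fintype (LinExt X n)] :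
    (∀ P P' : LinExt X n,
      ∑ Q : LinExt X n, pedMonomial P Q = ∑ Q : LinExt X n, pedMonomial P' Q) ∧
    Matrix.mulVec (fun P Q : LinExt X n => pedMonomial P Q) (fun _ => 1) =
      fun P => ∑ Q : LinExt X n, pedMonomial P Q :=
  pedestal_polynomial_independent_general X n
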